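/- If G is a dead end (a dead left end or a dead right end), then G + conj(G) is equivalent to 0 modulo the universe E of dead-ending games. -/

import Mathlib

universe u

namespace SetTheory

/-- Pre-game, as in Mathlib of December 2024 (`SetTheory.PGame`, since removed from Mathlib). -/
inductive PGame : Type (u + 1)
  | mk : ∀ α β : Type u, (α → PGame) → (β → PGame) → PGame

namespace PGame

def LeftMoves : PGame → Type u
  | mk l _ _ _ => l

def RightMoves : PGame → Type u
  | mk _ r _ _ => r

def moveLeft : ∀ g : PGame, LeftMoves g → PGame
  | mk _l _ L _ => L

def moveRight : ∀ g : PGame, RightMoves g → PGame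
  | mk _ _r _ R => R

inductive IsOption : PGame → PGame → Prop
  | moveLeft {x : PGame} (i : x.LeftMoves) : IsOption (x.moveLeft i) x
  | moveRight {x : PGame} (i : x.RightMoves) : IsOption (x.moveRight i) x

instance : Zero PGame :=
  ⟨⟨PEmpty, PEmpty, PEmpty.elim, PEmpty.elim⟩⟩

def neg : PGame → PGame
  | ⟨l, r, L, R⟩ => ⟨r, l, fun i => neg (R i), fun i => neg (L i)⟩

instance : Neg PGame :=
  ⟨neg⟩

/-- Inner recursion of the sum of pre-games (as in the December 2024 Mathlib instance). -/
def addAux (xl xr : Type u) (IHxl : xl → PGame.{u} → PGame.{u})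
    (IHxr : xr → PGame.{u} → PGame.{u}) : PGame.{u} → PGame.{u}
  | mk yl yr yL yR =>
    mk (xl ⊕ yl) (xr ⊕ yr)
      (Sum.elim (fun i => IHxl i (mk yl yr yL yR)) (fun i => addAux xl xr IHxl IHxr (yL i)))
      (Sum.elim (fun i => IHxr i (mk yl yr yL yR)) (fun i => addAux xl xr IHxl IHxr (yR i)))

/-- Sum of pre-games (same definition as the December 2024 Mathlib instance). -/
def add : PGame.{u} → PGame.{u} → PGame.{u}
  | mk xl xr xL xR => addAux xl xr (fun i => add (xL i)) (fun i => add (xR i))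

instance : Add PGame.{u} :=
  ⟨add⟩

end PGame

end SetTheory

open SetTheory

namespace Misere

/-- `F` is a follower of `G`: reachable from `G` by a (possibly empty) sequence of moves. -/
def Follower (F G : PGame) : Prop := Relation.ReflTransGen PGame.IsOption F G

def IsLeftEnd (G : PGame) : Prop := IsEmpty G.LeftMoves
def IsRightEnd (G : PGame) : Prop := IsEmpty G.RightMoves

/-- A dead left end: every follower (including itself) is a left end. -/
def DeadLeftEnd (G : PGame) : Prop := ∀ F, Follower F G → IsLeftEnd F
def DeadRightEnd (G : PGame) : Prop := ∀ F, Follower F G → IsRightEnd F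
def DeadEnd (G : PGame) : Prop := DeadLeftEnd G ∨ DeadRightEnd G

/-- A game is dead-ending if every end follower is a dead end. -/
def DeadEnding (G : PGame) : Prop :=
  ∀ F, Follower F G → (IsLeftEnd F → DeadLeftEnd F) ∧ (IsRightEnd F → DeadRightEnd F)

/-- The universe of dead-ending games. -/
def E : Set PGame := {G | DeadEnding G}

/-- `(misereWins G).1` : Left, moving first, wins `G` under misère play;
    `(misereWins G).2` : Right, moving first, wins `G` under misère play. -/
def misereWins : PGame → Prop × Prop
  | PGame.mk l r L R =>
      (IsEmpty l ∨ ∃ i, ¬ (misereWins (L i)).2,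
       IsEmpty r ∨ ∃ j, ¬ (misereWins (R j)).1)

def LeftWinsGF (G : PGame) : Prop := (misereWins G).1
def RightWinsGF (G : PGame) : Prop := (misereWins G).2

inductive MOutcome : Type
  | L | N | P | R
deriving DecidableEq

/-- Partial order on misère outcomes: `R` minimal, `L` maximal, `N` and `P` incomparable. -/
def MOutcome.le : MOutcome → MOutcome → Prop
  | .R, _ => True
  | _, .L => True
  | a, b => a = b

instance : LE MOutcome := ⟨MOutcome.le⟩

/-- The misère outcome of a game. -/
noncomputable def outcome (G : PGame) : MOutcome := by
  classical
  exact if LeftWinsGF G then (if RightWinsGF G then .N else .L)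
        else (if RightWinsGF G then .R else .P)

/-- `G ≡ H (mod U)`. -/
def equivMod (U : Set PGame) (G H : PGame) : Prop :=
  ∀ X ∈ U, outcome (G + X) = outcome (H + X)

/-- `G ≧ H (mod U)`. -/
def geMod (U : Set PGame) (G H : PGame) : Prop :=
  ∀ X ∈ U, outcome (H + X) ≤ outcome (G + X)

/-- `LeftChain G n`: there is a sequence of `n` consecutive Left moves from `G`
ending at the zero position. -/
inductive LeftChain : PGame → ℕ → Prop
  | zero (G : PGame) : IsLeftEnd G → IsRightEnd G → LeftChain G 0
  | succ (G : PGame) (i : G.LeftMoves) (n : ℕ) :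
      LeftChain (G.moveLeft i) n → LeftChain G (n + 1)

inductive RightChain : PGame → ℕ → Prop
  | zero (G : PGame) : IsLeftEnd G → IsRightEnd G → RightChain G 0
  | succ (G : PGame) (j : G.RightMoves) (n : ℕ) :
      RightChain (G.moveRight j) n → RightChain G (n + 1)

/-- Left-length: minimum number of consecutive Left moves needed to reach zero. -/
noncomputable def leftLength (G : PGame) : ℕ := sInf {n | LeftChain G n}

/-- Right-length: minimum number of consecutive Right moves needed to reach zero. -/
noncomputable def rightLength (G : PGame) : ℕ := sInf {n | RightChain G n}

/-- Normal-play canonical form of a nonnegative integer. -/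
def natGame : ℕ → PGame
  | 0 => 0
  | n + 1 => PGame.mk PUnit PEmpty (fun _ => natGame n) PEmpty.elim

/-- Normal-play canonical form of an integer (negatives are conjugates). -/
def intGame (n : ℤ) : PGame :=
  if 0 ≤ n then natGame n.toNat else -natGame (-n).toNat

/-- Normal-play canonical form of the dyadic rational `m / 2 ^ j`. -/
def dyadicGame : ℤ → ℕ → PGame
  | m, 0 => intGame m
  | m, j + 1 =>
      if m % 2 = 0 then dyadicGame (m / 2) j
      else PGame.mk PUnit PUnit (fun _ => dyadicGame ((m - 1) / 2) j)
            (fun _ => dyadicGame ((m + 1) / 2) j)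

/-- The closure of dead ends: finite disjunctive sums of dead ends. -/
def DeadEndClosure : Set PGame :=
  {G | ∃ l : List PGame, (∀ x ∈ l, DeadEnd x) ∧ G = l.sum}

end Misere

/-!
Call a game a *race* if, hereditarily, Left's moves never change the length of Right's shortest
run of consecutive moves to a Right end, and vice versa. Dead ends are races, and sums and
conjugates of races are races, with run lengths adding up. In a race the player moving first
wins under misère play iff their shortest run is at most their opponent's.

For a race `G` and a dead-ending `X`, induction on `G` and `X` shows that `G + -G + X` and `X`
have the same misère outcome: a winning first move in `X` stays winning, and a move in `G` or
`-G` is answered by the mirror move in the other component. If the player to move has no move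
in `X`, then `X` is a dead end since it is dead-ending, so `G + -G + X` is a race; in `G + -G`
both runs have length `leftDepth G + rightDepth G`, and `X` only lengthens the opponent's.
-/

namespace SetTheory.PGame

theorem moveInduction {C : PGame → Prop} (x : PGame)
    (IH : ∀ y : PGame, (∀ i, C (y.moveLeft i)) → (∀ j, C (y.moveRight j)) → C y) :
    C x := by
  induction x with
  | mk l r L R ihl ihr => exact IH _ ihl ihr

instance : IsEmpty (0 : PGame).LeftMoves := inferInstanceAs (IsEmpty PEmpty)

instance : IsEmpty (0 : PGame).RightMoves := inferInstanceAs (IsEmpty PEmpty)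

protected theorem neg_neg (x : PGame) : -(-x) = x := by
  induction x with
  | mk l r L R ihl ihr =>
    change PGame.mk l r (fun i => -(-(L i))) (fun j => -(-(R j))) = _
    simp only [ihl, ihr]

theorem leftMoves_neg (x : PGame) : (-x).LeftMoves = x.RightMoves := by cases x; rfl

theorem rightMoves_neg (x : PGame) : (-x).RightMoves = x.LeftMoves := by cases x; rfl

def toLeftMovesNeg {x : PGame} : x.RightMoves ≃ (-x).LeftMoves :=
  Equiv.cast (leftMoves_neg x).symm

def toRightMovesNeg {x : PGame} : x.LeftMoves ≃ (-x).RightMoves :=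
  Equiv.cast (rightMoves_neg x).symm

@[simp]
theorem moveLeft_neg {x : PGame} (j : x.RightMoves) :
    (-x).moveLeft (toLeftMovesNeg j) = -x.moveRight j := by
  cases x; rfl

@[simp]
theorem moveRight_neg {x : PGame} (i : x.LeftMoves) :
    (-x).moveRight (toRightMovesNeg i) = -x.moveLeft i := by
  cases x; rfl

protected theorem neg_add (x y : PGame) : -(x + y) = -x + -y := by
  induction x generalizing y with
  | mk xl xr xL xR ihxl ihxr =>
    induction y with
    | mk yl yr yL yR ihyl ihyr =>
      change PGame.mk (xr ⊕ yr) (xl ⊕ yl) _ _ = PGame.mk (xr ⊕ yr) (xl ⊕ yl) _ _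
      congr 1 <;> funext k <;> rcases k with i | j
      exacts [ihxr i _, ihyr j, ihxl i _, ihyl j]

theorem leftMoves_add (x y : PGame) : (x + y).LeftMoves = (x.LeftMoves ⊕ y.LeftMoves) := by
  cases x; cases y; rfl

theorem rightMoves_add (x y : PGame) : (x + y).RightMoves = (x.RightMoves ⊕ y.RightMoves) := by
  cases x; cases y; rfl

def toLeftMovesAdd {x y : PGame} : x.LeftMoves ⊕ y.LeftMoves ≃ (x + y).LeftMoves :=
  Equiv.cast (leftMoves_add x y).symm

def toRightMovesAdd {x y : PGame} : x.RightMoves ⊕ y.RightMoves ≃ (x + y).RightMoves :=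
  Equiv.cast (rightMoves_add x y).symm

@[simp]
theorem add_moveLeft_inl {x : PGame} (y : PGame) (i : x.LeftMoves) :
    (x + y).moveLeft (toLeftMovesAdd (.inl i)) = x.moveLeft i + y := by
  cases x; cases y; rfl

@[simp]
theorem add_moveLeft_inr (x : PGame) {y : PGame} (j : y.LeftMoves) :
    (x + y).moveLeft (toLeftMovesAdd (.inr j)) = x + y.moveLeft j := by
  cases x; cases y; rfl

@[simp]
theorem add_moveRight_inl {x : PGame} (y : PGame) (i : x.RightMoves) :
    (x + y).moveRight (toRightMovesAdd (.inl i)) = x.moveRight i + y := by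
  cases x; cases y; rfl

@[simp]
theorem add_moveRight_inr (x : PGame) {y : PGame} (j : y.RightMoves) :
    (x + y).moveRight (toRightMovesAdd (.inr j)) = x + y.moveRight j := by
  cases x; cases y; rfl

theorem isEmpty_leftMoves_neg {x : PGame} : IsEmpty (-x).LeftMoves ↔ IsEmpty x.RightMoves := by
  rw [leftMoves_neg]

theorem isEmpty_leftMoves_add {x y : PGame} :
    IsEmpty (x + y).LeftMoves ↔ IsEmpty x.LeftMoves ∧ IsEmpty y.LeftMoves := by
  rw [leftMoves_add, isEmpty_sum]

theorem isEmpty_rightMoves_add {x y : PGame} :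
    IsEmpty (x + y).RightMoves ↔ IsEmpty x.RightMoves ∧ IsEmpty y.RightMoves := by
  rw [rightMoves_add, isEmpty_sum]

theorem exists_leftMoves_neg {x : PGame} {p : (-x).LeftMoves → Prop} :
    (∃ k, p k) ↔ ∃ j, p (toLeftMovesNeg j) :=
  toLeftMovesNeg.symm.exists_congr_left

theorem exists_rightMoves_neg {x : PGame} {p : (-x).RightMoves → Prop} :
    (∃ k, p k) ↔ ∃ i, p (toRightMovesNeg i) :=
  toRightMovesNeg.symm.exists_congr_left

theorem forall_leftMoves_neg {x : PGame} {p : (-x).LeftMoves → Prop} :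
    (∀ k, p k) ↔ ∀ j, p (toLeftMovesNeg j) :=
  toLeftMovesNeg.symm.forall_congr_left

theorem forall_rightMoves_neg {x : PGame} {p : (-x).RightMoves → Prop} :
    (∀ k, p k) ↔ ∀ i, p (toRightMovesNeg i) :=
  toRightMovesNeg.symm.forall_congr_left

theorem exists_leftMoves_add {x y : PGame} {p : (x + y).LeftMoves → Prop} :
    (∃ k, p k) ↔ (∃ i, p (toLeftMovesAdd (.inl i))) ∨ ∃ j, p (toLeftMovesAdd (.inr j)) :=
  toLeftMovesAdd.symm.exists_congr_left.trans Sum.exists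

theorem exists_rightMoves_add {x y : PGame} {p : (x + y).RightMoves → Prop} :
    (∃ k, p k) ↔
      (∃ i, p (toRightMovesAdd (.inl i))) ∨ ∃ j, p (toRightMovesAdd (.inr j)) :=
  toRightMovesAdd.symm.exists_congr_left.trans Sum.exists

theorem forall_leftMoves_add {x y : PGame} {p : (x + y).LeftMoves → Prop} :
    (∀ k, p k) ↔ (∀ i, p (toLeftMovesAdd (.inl i))) ∧ ∀ j, p (toLeftMovesAdd (.inr j)) :=
  toLeftMovesAdd.symm.forall_congr_left.trans Sum.forall

theorem forall_rightMoves_add {x y : PGame} {p : (x + y).RightMoves → Prop} :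
    (∀ k, p k) ↔
      (∀ i, p (toRightMovesAdd (.inl i))) ∧ ∀ j, p (toRightMovesAdd (.inr j)) :=
  toRightMovesAdd.symm.forall_congr_left.trans Sum.forall

-- The length of Left's shortest run of consecutive moves to a Left end: `⨅` over an empty
-- type is `0` in `ℕ`, which is the right value at Left ends.
noncomputable def leftDepth : PGame → ℕ
  | mk _ _ L _ => ⨅ i, leftDepth (L i) + 1

noncomputable def rightDepth (x : PGame) : ℕ :=
  leftDepth (-x)

theorem leftDepth_eq_iInf (x : PGame) : leftDepth x = ⨅ i, leftDepth (x.moveLeft i) + 1 := by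
  cases x; rfl

theorem leftDepth_eq_zero {x : PGame} (h : IsEmpty x.LeftMoves) : leftDepth x = 0 := by
  rw [leftDepth_eq_iInf, Nat.iInf_of_empty]

theorem leftDepth_le {x : PGame} (i : x.LeftMoves) : leftDepth x ≤ leftDepth (x.moveLeft i) + 1 :=
  leftDepth_eq_iInf x ▸ ciInf_le (OrderBot.bddBelow _) i

theorem exists_leftDepth_eq (x : PGame) [Nonempty x.LeftMoves] :
    ∃ i, leftDepth x = leftDepth (x.moveLeft i) + 1 := by
  obtain ⟨i, hi⟩ := ciInf_mem fun i => leftDepth (x.moveLeft i) + 1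
  exact ⟨i, (leftDepth_eq_iInf x).trans hi.symm⟩

theorem leftDepth_le_iff {x : PGame} {n : ℕ} :
    leftDepth x ≤ n ↔ IsEmpty x.LeftMoves ∨ ∃ i, leftDepth (x.moveLeft i) + 1 ≤ n := by
  constructor
  · intro h
    rcases isEmpty_or_nonempty x.LeftMoves with hx | hx
    · exact .inl hx
    · obtain ⟨i, hi⟩ := exists_leftDepth_eq x
      exact .inr ⟨i, hi ▸ h⟩
  · rintro (hx | ⟨i, hi⟩)
    · simp [leftDepth_eq_zero hx]
    · exact (leftDepth_le i).trans hi

theorem leftDepth_add (x y : PGame) : leftDepth (x + y) = leftDepth x + leftDepth y := by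
  induction x using moveInduction generalizing y with
  | IH x ihx _ =>
    induction y using moveInduction with
    | IH y ihy _ =>
      apply le_antisymm
      · rcases isEmpty_or_nonempty x.LeftMoves with hx | hx
        · rcases isEmpty_or_nonempty y.LeftMoves with hy | hy
          · rw [leftDepth_eq_zero (isEmpty_leftMoves_add.2 ⟨hx, hy⟩)]
            exact Nat.zero_le _
          · obtain ⟨j, hj⟩ := exists_leftDepth_eq y
            have := leftDepth_le (toLeftMovesAdd (x := x) (.inr j))
            rw [add_moveLeft_inr, ihy] at this
            omega
        · obtain ⟨i, hi⟩ := exists_leftDepth_eq x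
          have := leftDepth_le (toLeftMovesAdd (y := y) (.inl i))
          rw [add_moveLeft_inl, ihx] at this
          omega
      · rcases isEmpty_or_nonempty (x + y).LeftMoves with h | h
        · obtain ⟨hx, hy⟩ := isEmpty_leftMoves_add.1 h
          simp [leftDepth_eq_zero hx, leftDepth_eq_zero hy]
        · obtain ⟨k, hk⟩ := exists_leftDepth_eq (x + y)
          obtain ⟨i | j, rfl⟩ := toLeftMovesAdd.surjective k
          · rw [hk, add_moveLeft_inl, ihx]
            linarith [leftDepth_le i]
          · rw [hk, add_moveLeft_inr, ihy]
            linarith [leftDepth_le j]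

theorem leftDepth_neg (x : PGame) : leftDepth (-x) = rightDepth x :=
  rfl

theorem rightDepth_neg (x : PGame) : rightDepth (-x) = leftDepth x := by
  rw [rightDepth, PGame.neg_neg]

theorem rightDepth_add (x y : PGame) : rightDepth (x + y) = rightDepth x + rightDepth y := by
  rw [rightDepth, PGame.neg_add, leftDepth_add, leftDepth_neg, leftDepth_neg]

theorem rightDepth_eq_zero {x : PGame} (h : IsEmpty x.RightMoves) : rightDepth x = 0 :=
  leftDepth_eq_zero (isEmpty_leftMoves_neg.2 h)

theorem rightDepth_le_iff {x : PGame} {n : ℕ} :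
    rightDepth x ≤ n ↔
      IsEmpty x.RightMoves ∨ ∃ j, rightDepth (x.moveRight j) + 1 ≤ n := by
  simp only [rightDepth, leftDepth_le_iff, isEmpty_leftMoves_neg, exists_leftMoves_neg,
    moveLeft_neg]

def IsRace : PGame → Prop
  | x@(mk _ _ L R) =>
    (∀ i, rightDepth (L i) = rightDepth x ∧ IsRace (L i)) ∧
      ∀ j, leftDepth (R j) = leftDepth x ∧ IsRace (R j)

theorem isRace_iff {x : PGame} :
    IsRace x ↔ (∀ i, rightDepth (x.moveLeft i) = rightDepth x ∧ IsRace (x.moveLeft i)) ∧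
      ∀ j, leftDepth (x.moveRight j) = leftDepth x ∧ IsRace (x.moveRight j) := by
  cases x; rfl

theorem IsRace.add {x y : PGame} (hx : IsRace x) (hy : IsRace y) : IsRace (x + y) := by
  induction x using moveInduction generalizing y with
  | IH x ihxl ihxr =>
    induction y using moveInduction with
    | IH y ihyl ihyr =>
      obtain ⟨hxl, hxr⟩ := isRace_iff.1 hx
      obtain ⟨hyl, hyr⟩ := isRace_iff.1 hy
      rw [isRace_iff]
      simp only [forall_leftMoves_add, forall_rightMoves_add, add_moveLeft_inl, add_moveLeft_inr,
        add_moveRight_inl, add_moveRight_inr, leftDepth_add, rightDepth_add]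
      refine ⟨⟨fun i => ⟨by rw [(hxl i).1], ihxl i (hxl i).2 hy⟩,
          fun j => ⟨by rw [(hyl j).1], ihyl j (hyl j).2⟩⟩,
        ⟨fun i => ⟨by rw [(hxr i).1], ihxr i (hxr i).2 hy⟩,
          fun j => ⟨by rw [(hyr j).1], ihyr j (hyr j).2⟩⟩⟩

theorem IsRace.neg {x : PGame} (hx : IsRace x) : IsRace (-x) := by
  induction x using moveInduction with
  | IH x ihl ihr =>
    obtain ⟨hl, hr⟩ := isRace_iff.1 hx
    rw [isRace_iff]
    simp only [forall_leftMoves_neg, forall_rightMoves_neg, moveLeft_neg, moveRight_neg,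
      leftDepth_neg, rightDepth_neg]
    exact ⟨fun j => ⟨(hr j).1, ihr j (hr j).2⟩, fun i => ⟨(hl i).1, ihl i (hl i).2⟩⟩

end SetTheory.PGame

namespace Misere

open SetTheory PGame

theorem leftWins_iff (x : PGame) :
    LeftWinsGF x ↔ IsEmpty x.LeftMoves ∨ ∃ i, ¬RightWinsGF (x.moveLeft i) := by
  cases x; rfl

theorem rightWins_iff (x : PGame) :
    RightWinsGF x ↔ IsEmpty x.RightMoves ∨ ∃ j, ¬LeftWinsGF (x.moveRight j) := by
  cases x; rfl

theorem leftWins_of_moveLeft {x : PGame} (i : x.LeftMoves) (h : ¬RightWinsGF (x.moveLeft i)) :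
    LeftWinsGF x :=
  (leftWins_iff x).2 (.inr ⟨i, h⟩)

theorem rightWins_of_moveRight {x : PGame} (j : x.RightMoves) (h : ¬LeftWinsGF (x.moveRight j)) :
    RightWinsGF x :=
  (rightWins_iff x).2 (.inr ⟨j, h⟩)

theorem leftWins_add_neg_moveLeft_add {x y z : PGame} (h : ¬RightWinsGF (x + -y + z))
    (i : y.LeftMoves) : LeftWinsGF (x + -y.moveLeft i + z) := by
  by_contra hi
  exact h (rightWins_of_moveRight
    (toRightMovesAdd (.inl (toRightMovesAdd (.inr (toRightMovesNeg i)))))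
    (by rwa [add_moveRight_inl, add_moveRight_inr, moveRight_neg]))

theorem leftWins_moveRight_add_add {x y z : PGame} (h : ¬RightWinsGF (x + y + z))
    (j : x.RightMoves) : LeftWinsGF (x.moveRight j + y + z) := by
  by_contra hj
  exact h (rightWins_of_moveRight (toRightMovesAdd (.inl (toRightMovesAdd (.inl j))))
    (by rwa [add_moveRight_inl, add_moveRight_inl]))

theorem rightWins_add_neg_moveRight_add {x y z : PGame} (h : ¬LeftWinsGF (x + -y + z))
    (j : y.RightMoves) : RightWinsGF (x + -y.moveRight j + z) := by
  by_contra hj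
  exact h (leftWins_of_moveLeft
    (toLeftMovesAdd (.inl (toLeftMovesAdd (.inr (toLeftMovesNeg j)))))
    (by rwa [add_moveLeft_inl, add_moveLeft_inr, moveLeft_neg]))

theorem rightWins_moveLeft_add_add {x y z : PGame} (h : ¬LeftWinsGF (x + y + z))
    (i : x.LeftMoves) : RightWinsGF (x.moveLeft i + y + z) := by
  by_contra hi
  exact h (leftWins_of_moveLeft (toLeftMovesAdd (.inl (toLeftMovesAdd (.inl i))))
    (by rwa [add_moveLeft_inl, add_moveLeft_inl]))

theorem outcome_congr {x y : PGame} (hl : LeftWinsGF x ↔ LeftWinsGF y)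
    (hr : RightWinsGF x ↔ RightWinsGF y) : outcome x = outcome y := by
  unfold outcome
  rw [propext hl, propext hr]

theorem wins_zero_add (x : PGame) :
    (LeftWinsGF (0 + x) ↔ LeftWinsGF x) ∧ (RightWinsGF (0 + x) ↔ RightWinsGF x) := by
  induction x using moveInduction with
  | IH x ihl ihr =>
    constructor
    · rw [leftWins_iff, leftWins_iff x]
      simp only [isEmpty_leftMoves_add, exists_leftMoves_add, add_moveLeft_inr]
      constructor
      · rintro (⟨-, h⟩ | ⟨i, -⟩ | ⟨i, hi⟩)
        exacts [.inl h, isEmptyElim i, .inr ⟨i, fun h => hi ((ihl i).2.2 h)⟩]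
      · rintro (h | ⟨i, hi⟩)
        exacts [.inl ⟨inferInstance, h⟩, .inr (.inr ⟨i, fun h => hi ((ihl i).2.1 h)⟩)]
    · rw [rightWins_iff, rightWins_iff x]
      simp only [isEmpty_rightMoves_add, exists_rightMoves_add, add_moveRight_inr]
      constructor
      · rintro (⟨-, h⟩ | ⟨j, -⟩ | ⟨j, hj⟩)
        exacts [.inl h, isEmptyElim j, .inr ⟨j, fun h => hj ((ihr j).1.2 h)⟩]
      · rintro (h | ⟨j, hj⟩)
        exacts [.inl ⟨inferInstance, h⟩, .inr (.inr ⟨j, fun h => hj ((ihr j).1.1 h)⟩)]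

theorem DeadLeftEnd.of_isOption {x y : PGame} (h : DeadLeftEnd x) (hyx : IsOption y x) :
    DeadLeftEnd y :=
  fun F hF => h F (hF.tail hyx)

theorem DeadRightEnd.of_isOption {x y : PGame} (h : DeadRightEnd x) (hyx : IsOption y x) :
    DeadRightEnd y :=
  fun F hF => h F (hF.tail hyx)

theorem DeadEnd.of_isOption {x y : PGame} (h : DeadEnd x) (hyx : IsOption y x) : DeadEnd y :=
  h.imp (·.of_isOption hyx) (·.of_isOption hyx)

theorem DeadEnding.of_isOption {x y : PGame} (h : DeadEnding x) (hyx : IsOption y x) :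
    DeadEnding y :=
  fun F hF => h F (hF.tail hyx)

theorem DeadLeftEnd.isLeftEnd {x : PGame} (h : DeadLeftEnd x) : IsLeftEnd x :=
  h x .refl

theorem DeadRightEnd.isRightEnd {x : PGame} (h : DeadRightEnd x) : IsRightEnd x :=
  h x .refl

theorem DeadEnding.deadLeftEnd {x : PGame} (h : DeadEnding x) (hx : IsLeftEnd x) :
    DeadLeftEnd x :=
  (h x .refl).1 hx

theorem DeadEnding.deadRightEnd {x : PGame} (h : DeadEnding x) (hx : IsRightEnd x) :
    DeadRightEnd x :=
  (h x .refl).2 hx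

theorem DeadEnd.isRace {x : PGame} (h : DeadEnd x) : IsRace x := by
  induction x using moveInduction with
  | IH x ihl ihr =>
    rw [isRace_iff]
    refine ⟨fun i => ⟨?_, ihl i (h.of_isOption (.moveLeft i))⟩,
      fun j => ⟨?_, ihr j (h.of_isOption (.moveRight j))⟩⟩
    · rcases h with h | h
      · exact (h.isLeftEnd.false i).elim
      · rw [rightDepth_eq_zero h.isRightEnd,
          rightDepth_eq_zero (h.of_isOption (.moveLeft i)).isRightEnd]
    · rcases h with h | h
      · rw [leftDepth_eq_zero h.isLeftEnd,
          leftDepth_eq_zero (h.of_isOption (.moveRight j)).isLeftEnd]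
      · exact (h.isRightEnd.false j).elim

theorem wins_iff_of_isRace {x : PGame} (h : IsRace x) :
    (LeftWinsGF x ↔ leftDepth x ≤ rightDepth x) ∧
      (RightWinsGF x ↔ rightDepth x ≤ leftDepth x) := by
  induction x using moveInduction with
  | IH x ihl ihr =>
    obtain ⟨hl, hr⟩ := isRace_iff.1 h
    rw [leftWins_iff, rightWins_iff, leftDepth_le_iff, rightDepth_le_iff]
    refine ⟨or_congr .rfl (exists_congr fun i => ?_), or_congr .rfl (exists_congr fun j => ?_)⟩
    · rw [(ihl i (hl i).2).2, (hl i).1]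
      omega
    · rw [(ihr j (hr j).2).1, (hr j).1]
      omega

theorem leftWins_add_neg_add_of_deadLeftEnd {G X : PGame} (hG : IsRace G) (hX : DeadLeftEnd X) :
    LeftWinsGF (G + -G + X) := by
  rw [(wins_iff_of_isRace ((hG.add hG.neg).add (DeadEnd.isRace (.inl hX)))).1, leftDepth_add,
    leftDepth_add, leftDepth_eq_zero hX.isLeftEnd, rightDepth_add, rightDepth_add, leftDepth_neg,
    rightDepth_neg]
  omega

theorem rightWins_add_neg_add_of_deadRightEnd {G X : PGame} (hG : IsRace G)
    (hX : DeadRightEnd X) : RightWinsGF (G + -G + X) := by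
  rw [(wins_iff_of_isRace ((hG.add hG.neg).add (DeadEnd.isRace (.inr hX)))).2, rightDepth_add,
    rightDepth_add, rightDepth_eq_zero hX.isRightEnd, leftDepth_add, leftDepth_add, leftDepth_neg,
    rightDepth_neg]
  omega

theorem wins_add_neg_add_iff {G X : PGame} (hG : IsRace G) (hX : DeadEnding X) :
    (LeftWinsGF (G + -G + X) ↔ LeftWinsGF X) ∧
      (RightWinsGF (G + -G + X) ↔ RightWinsGF X) := by
  induction G using moveInduction generalizing X with
  | IH G ihGl ihGr =>
    induction X using moveInduction with
    | IH X ihXl ihXr =>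
      obtain ⟨hGl, hGr⟩ := isRace_iff.1 hG
      refine ⟨⟨fun h => ?_, fun h => ?_⟩, ⟨fun h => ?_, fun h => ?_⟩⟩
      · rw [leftWins_iff] at h
        simp only [isEmpty_leftMoves_add, exists_leftMoves_add, exists_leftMoves_neg,
          add_moveLeft_inl, add_moveLeft_inr, moveLeft_neg] at h
        rcases h with ⟨-, hX0⟩ | (⟨i, hi⟩ | ⟨j, hj⟩) | ⟨k, hk⟩
        · exact (leftWins_iff X).2 (.inl hX0)
        · exact (ihGl i (hGl i).2 hX).1.1 (leftWins_add_neg_moveLeft_add hi i)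
        · exact (ihGr j (hGr j).2 hX).1.1 (leftWins_moveRight_add_add hj j)
        · exact leftWins_of_moveLeft k
            fun h => hk ((ihXl k (hX.of_isOption (.moveLeft k))).2.2 h)
      · rcases (leftWins_iff X).1 h with hX0 | ⟨k, hk⟩
        · exact leftWins_add_neg_add_of_deadLeftEnd hG (hX.deadLeftEnd hX0)
        · refine leftWins_of_moveLeft (toLeftMovesAdd (.inr k)) ?_
          rw [add_moveLeft_inr]
          exact fun h => hk ((ihXl k (hX.of_isOption (.moveLeft k))).2.1 h)
      · rw [rightWins_iff] at h
        simp only [isEmpty_rightMoves_add, exists_rightMoves_add, exists_rightMoves_neg,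
          add_moveRight_inl, add_moveRight_inr, moveRight_neg] at h
        rcases h with ⟨-, hX0⟩ | (⟨j, hj⟩ | ⟨i, hi⟩) | ⟨k, hk⟩
        · exact (rightWins_iff X).2 (.inl hX0)
        · exact (ihGr j (hGr j).2 hX).2.1 (rightWins_add_neg_moveRight_add hj j)
        · exact (ihGl i (hGl i).2 hX).2.1 (rightWins_moveLeft_add_add hi i)
        · exact rightWins_of_moveRight k
            fun h => hk ((ihXr k (hX.of_isOption (.moveRight k))).1.2 h)
      · rcases (rightWins_iff X).1 h with hX0 | ⟨k, hk⟩
        · exact rightWins_add_neg_add_of_deadRightEnd hG (hX.deadRightEnd hX0)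
        · refine rightWins_of_moveRight (toRightMovesAdd (.inr k)) ?_
          rw [add_moveRight_inr]
          exact fun h => hk ((ihXr k (hX.of_isOption (.moveRight k))).1.1 h)

end Misere

open Misere SetTheory PGame

/-- a dead end plus its conjugate is equivalent to 0 modulo E. -/
theorem stmt5 (G : PGame) (hG : DeadEnd G) :
    equivMod E (G + -G) 0 := by
  intro X hX
  obtain ⟨hl, hr⟩ := wins_add_neg_add_iff hG.isRace hX
  obtain ⟨h0l, h0r⟩ := wins_zero_add X
  exact outcome_congr (hl.trans h0l.symm) (hr.trans h0r.symm)
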